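/- arXiv:2303.16785 — 3 statements merged into one kernel-verified Lean document; each statement's English description precedes it below -/
import Mathlib

section
/- In the module of functions $\mathbb{Z}^n \to \mathbb{Z}[y]$ over the group algebra $\mathbb{Z}[y][\mathbb{Z}^n]$, the convolution of $\phi$ with $\prod_{i=1}^n (1 - \chi^{m_i})$ equals the finitely supported function $\prod_{i=1}^n (1 + y\,\chi^{m_i})$; that is, $\Big(\prod_{i=1}^n (1 - \chi^{m_i})\Big)\cdot \phi \;=\; \prod_{i=1}^n (1 + y\,\chi^{m_i})$, where the right-hand side is expanded in $\mathbb{Z}[y][\mathbb{Z}^n]$. (In particular the weighted cone character sum $\phi$ is summable with this sum.) -/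
/-!
Both sides are computed by one formula. In the coordinates `t = b.repr x`, `φ` is the product
`∏ i, coneFactor (t i)` of one-variable functions, and the coefficient of `x` in a group algebra
element `g` is `g` convolved with the delta function at `0`, which is the product of the delta
functions at `0` of the coordinates. Convolving such a product function with
`∏ i, (1 + c i χ^{b i})` gives `∏ i, (c i * f i (t i - 1) + f i (t i))`, so the theorem reduces to
the one-variable identity `coneFactor t - coneFactor (t - 1) = δ₀ t + X δ₀ (t - 1)`.
-/

open Classical

noncomputable section

/-- An element of the group algebra `ℤ[y][ℤ^n]`, viewed as a finitely supported function. -/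
def MAfun {n : ℕ} (g : AddMonoidAlgebra (Polynomial ℤ) (Fin n → ℤ)) :
    (Fin n → ℤ) →₀ Polynomial ℤ := g.coeff

/-- Convolution of a finitely supported function (an element of the group algebra
`ℤ[y][ℤ^n]`) with an arbitrary function `ℤ^n → ℤ[y]`. -/
def conv {n : ℕ} (g : AddMonoidAlgebra (Polynomial ℤ) (Fin n → ℤ))
    (φ : (Fin n → ℤ) → Polynomial ℤ) : (Fin n → ℤ) → Polynomial ℤ :=
  fun x => ∑ m ∈ (MAfun g).support, MAfun g m * φ (x - m)

open Finset Polynomial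

lemma AddMonoidAlgebra.prod_one_add_single {R M ι : Type*} [CommSemiring R] [AddCommMonoid M]
    (s : Finset ι) (v : ι → M) (c : ι → R) :
    ∏ i ∈ s, (1 + single (v i) (c i) : AddMonoidAlgebra R M) =
      ∑ T ∈ s.powerset, single (∑ i ∈ T, v i) (∏ i ∈ T, c i) := by
  simp_rw [add_comm (1 : AddMonoidAlgebra R M), Finset.prod_add, prod_const_one, mul_one,
    AddMonoidAlgebra.prod_single]

lemma Module.Basis.repr_sub_sum {R M ι : Type*} [Ring R] [AddCommGroup M] [Module R M]
    (b : Module.Basis ι R M) (x : M) (T : Finset ι) (j : ι) :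
    b.repr (x - ∑ i ∈ T, b i) j = b.repr x j - if j ∈ T then 1 else 0 := by
  simp [Finsupp.single_apply]

lemma Module.Basis.ite_eq_zero_eq_prod {R S M ι : Type*} [CommMonoidWithZero R] [Semiring S]
    [AddCommMonoid M] [Module S M] [Fintype ι] (b : Module.Basis ι S M) (x : M) :
    (if x = 0 then (1 : R) else 0) = ∏ i, if b.repr x i = 0 then 1 else 0 := by
  rw [Fintype.prod_boole]
  simp only [← b.repr.map_eq_zero_iff, Finsupp.ext_iff, Finsupp.coe_zero, Pi.zero_apply]

section Convolution

variable {n : ℕ}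

lemma conv_add (g h : AddMonoidAlgebra ℤ[X] (Fin n → ℤ)) (φ : (Fin n → ℤ) → ℤ[X]) :
    conv (g + h) φ = conv g φ + conv h φ := by
  funext x
  exact Finsupp.sum_add_index' (h := fun m p => p * φ (x - m)) (fun m => zero_mul _)
    (fun m _ _ => add_mul _ _ _)

lemma conv_sum {κ : Type*} (s : Finset κ) (g : κ → AddMonoidAlgebra ℤ[X] (Fin n → ℤ))
    (φ : (Fin n → ℤ) → ℤ[X]) : conv (∑ k ∈ s, g k) φ = ∑ k ∈ s, conv (g k) φ :=
  map_sum (AddMonoidHom.mk' (conv · φ) (conv_add · · φ)) g s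

lemma conv_single (m : Fin n → ℤ) (c : ℤ[X]) (φ : (Fin n → ℤ) → ℤ[X]) (x : Fin n → ℤ) :
    conv (AddMonoidAlgebra.single m c) φ x = c * φ (x - m) :=
  Finsupp.sum_single_index (h := fun m p => p * φ (x - m)) (zero_mul _)

lemma MAfun_apply_eq_conv (g : AddMonoidAlgebra ℤ[X] (Fin n → ℤ)) (x : Fin n → ℤ) :
    MAfun g x = conv g (fun y => if y = 0 then 1 else 0) x := by
  rw [conv, Finset.sum_eq_single x]
  · simp
  · intro m _ hm
    simp [sub_eq_zero, Ne.symm hm]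
  · intro hx
    simp [Finsupp.notMem_support_iff.mp hx]

lemma conv_prod_one_add_single_basis {ι : Type*} [Fintype ι]
    (b : Module.Basis ι ℤ (Fin n → ℤ)) (c : ι → ℤ[X]) (f : ι → ℤ → ℤ[X]) (x : Fin n → ℤ) :
    conv (∏ i, (1 + AddMonoidAlgebra.single (b i) (c i))) (fun y => ∏ i, f i (b.repr y i)) x =
      ∏ i, (c i * f i (b.repr x i - 1) + f i (b.repr x i)) := by
  rw [AddMonoidAlgebra.prod_one_add_single, conv_sum, Finset.sum_apply, Finset.prod_add]
  refine Finset.sum_congr rfl fun T _ => ?_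
  have hshift : ∏ i, f i (b.repr (x - ∑ i ∈ T, b i) i) =
      ∏ i, T.piecewise (fun i => f i (b.repr x i - 1)) (fun i => f i (b.repr x i)) i := by
    refine Finset.prod_congr rfl fun i _ => ?_
    rw [Module.Basis.repr_sub_sum]
    by_cases hi : i ∈ T <;> simp [hi]
  rw [conv_single, hshift, Finset.prod_piecewise, univ_inter, Finset.prod_mul_distrib, mul_assoc]

end Convolution

def coneFactor (t : ℤ) : ℤ[X] :=
  if t < 0 then 0 else if t = 0 then 1 else 1 + X

lemma neg_coneFactor_sub_one_add_coneFactor (t : ℤ) :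
    -1 * coneFactor (t - 1) + coneFactor t =
      X * (if t - 1 = 0 then 1 else 0) + (if t = 0 then 1 else 0) := by
  unfold coneFactor
  split_ifs <;> first | (exfalso; omega) | ring

lemma weightedConeCharacter_eq_prod_coneFactor {M ι : Type*} [AddCommGroup M] [Fintype ι]
    (b : Module.Basis ι ℤ M) (x : M) :
    (if ∀ i, 0 ≤ b.repr x i
      then (1 + X) ^ (univ.filter fun i => b.repr x i ≠ 0).card else 0) =
      ∏ i, coneFactor (b.repr x i) := by
  split_ifs with hx
  · have hfactor : ∀ i, coneFactor (b.repr x i) = if b.repr x i ≠ 0 then 1 + X else 1 := by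
      intro i
      by_cases hi : b.repr x i = 0 <;> simp [coneFactor, hi, (hx i).not_gt]
    rw [Finset.prod_congr rfl fun i _ => hfactor i, Finset.prod_ite, prod_const, prod_const_one,
      mul_one]
  · obtain ⟨i, hi⟩ := not_forall.mp hx
    exact (Finset.prod_eq_zero (mem_univ i) (by simp [coneFactor, not_le.mp hi])).symm

/-- Let `m₁, …, mₙ` (the basis `b`) be a `ℤ`-basis of `ℤ^n`, spanning the
cone `C`, and let `φ : ℤ^n → ℤ[y]` be the weighted cone character sum, `φ(m) = (1+y)^{|S(m)|}`
for `m = ∑ aᵢ mᵢ ∈ C ∩ ℤ^n` (with `S(m) = {i : aᵢ > 0}`) and `φ(m) = 0` otherwise.  Then, in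
the module of functions `ℤ^n → ℤ[y]` over the group algebra `ℤ[y][ℤ^n]` (acting by
convolution), `(∏ᵢ (1 - χ^{mᵢ})) · φ = ∏ᵢ (1 + y χ^{mᵢ})`, the right-hand side being expanded
in `ℤ[y][ℤ^n]`. -/
theorem stmt2 (n : ℕ) (b : Module.Basis (Fin n) ℤ (Fin n → ℤ))
    (φ : (Fin n → ℤ) → Polynomial ℤ)
    (hφ : φ = fun x => if ∀ i, 0 ≤ b.repr x i
      then (1 + Polynomial.X) ^ (Finset.univ.filter fun i => b.repr x i ≠ 0).card
      else 0) :
    conv (∏ i, (1 - AddMonoidAlgebra.single (b i) 1)) φ =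
      fun x => MAfun (∏ i, (1 + AddMonoidAlgebra.single (b i) Polynomial.X)) x := by
  have hφ' : φ = fun y => ∏ i, coneFactor (b.repr y i) := by
    rw [hφ]; funext y; convert weightedConeCharacter_eq_prod_coneFactor b y
  have hδ : (fun y : Fin n → ℤ => if y = 0 then (1 : ℤ[X]) else 0) =
      fun y => ∏ i, if b.repr y i = 0 then 1 else 0 := by
    funext y; convert Module.Basis.ite_eq_zero_eq_prod b y
  funext x
  rw [hφ', MAfun_apply_eq_conv, hδ]
  simp_rw [sub_eq_add_neg, ← AddMonoidAlgebra.single_neg]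
  rw [conv_prod_one_add_single_basis b (fun _ => -1) (fun _ => coneFactor),
    conv_prod_one_add_single_basis b (fun _ => X) (fun _ t => if t = 0 then 1 else 0)]
  exact Finset.prod_congr rfl fun i _ => neg_coneFactor_sub_one_add_coneFactor _
end
end

section
/- For every $z \in \mathbb{C}^n$ with $\mathrm{Re}\,\langle w_i, z\rangle < 0$ for all $i$, the function $m \mapsto e^{\langle m, z\rangle}$ is integrable on $T$ and $\int_T e^{\langle m, z\rangle}\, d\lambda(m) \;=\; |\det(w_1,\dots,w_n)|\; e^{\langle v, z\rangle} \prod_{i=1}^n \frac{-1}{\langle w_i, z\rangle}$. -/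
/-! The affine map `a ↦ v + ∑ aᵢ wᵢ` is injective by linear independence, has Jacobian
`det(w₁, …, wₙ)`, and maps the nonnegative orthant onto `T`. Pulled back along it,
`e^{⟨m, z⟩}` becomes `e^{⟨v, z⟩} ∏ᵢ e^{aᵢ ⟨wᵢ, z⟩}`, so by Fubini the integral over the orthant
splits into the one-dimensional integrals `∫₀^∞ e^{t c} dt = -1/c`. -/

open MeasureTheory

noncomputable section

/-- Cast a lattice vector to a real vector. -/
def castZ {n : ℕ} (x : Fin n → ℤ) : Fin n → ℝ := fun i => (x i : ℝ)

/-- The standard `ℂ`-bilinear pairing between `ℝ^n` and `ℂ^n`. -/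
def pairC {n : ℕ} (m : Fin n → ℝ) (z : Fin n → ℂ) : ℂ := ∑ j, (m j : ℂ) * z j

open Set Function

section AffineChangeOfVariables

variable {E : Type*} [NormedAddCommGroup E] [NormedSpace ℝ E] [FiniteDimensional ℝ E]

theorem hasFDerivWithinAt_const_add_linearMap (L : E →ₗ[ℝ] E) (v : E) (s : Set E) (a : E) :
    HasFDerivWithinAt (v + L ·) (LinearMap.toContinuousLinearMap L) s a :=
  ((LinearMap.toContinuousLinearMap L).hasFDerivAt.const_add v).hasFDerivWithinAt

variable [MeasurableSpace E] [BorelSpace E] (μ : Measure E) [μ.IsAddHaarMeasure]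
  {F : Type*} [NormedAddCommGroup F] [NormedSpace ℝ F]

theorem integrableOn_image_const_add_linearMap_iff {s : Set E} (hs : MeasurableSet s)
    {L : E →ₗ[ℝ] E} (hL : Injective L) (v : E) (g : E → F) :
    IntegrableOn g ((v + L ·) '' s) μ ↔ IntegrableOn (fun a => |L.det| • g (v + L a)) s μ :=
  integrableOn_image_iff_integrableOn_abs_det_fderiv_smul μ hs
    (fun a _ => hasFDerivWithinAt_const_add_linearMap L v s a)
    ((add_right_injective v).comp hL).injOn g

theorem setIntegral_image_const_add_linearMap {s : Set E} (hs : MeasurableSet s)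
    {L : E →ₗ[ℝ] E} (hL : Injective L) (v : E) (g : E → F) :
    ∫ x in (v + L ·) '' s, g x ∂μ = |L.det| • ∫ a in s, g (v + L a) ∂μ := by
  rw [integral_image_eq_integral_abs_det_fderiv_smul μ hs
    (fun a _ => hasFDerivWithinAt_const_add_linearMap L v s a)
    ((add_right_injective v).comp hL).injOn g, integral_smul, LinearMap.det_toContinuousLinearMap]

end AffineChangeOfVariables

section Orthant

variable {ι : Type*} [Fintype ι] {c : ι → ℂ}

theorem integrableOn_Ici_cexp_mul {a : ℂ} (ha : a.re < 0) :
    IntegrableOn (fun t : ℝ => Complex.exp (a * t)) (Ici 0) :=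
  (integrableOn_Ici_iff_integrableOn_Ioi).mpr (integrableOn_exp_mul_complex_Ioi ha 0)

theorem integral_Ici_cexp_mul {a : ℂ} (ha : a.re < 0) :
    ∫ t in Ici (0 : ℝ), Complex.exp (a * t) = -1 / a := by
  simp [integral_Ici_eq_integral_Ioi, integral_exp_mul_complex_Ioi ha, neg_div]

theorem integrableOn_pi_Ici_prod_cexp_mul (hc : ∀ i, (c i).re < 0) :
    IntegrableOn (fun a : ι → ℝ => ∏ i, Complex.exp (c i * a i)) (univ.pi fun _ => Ici 0) := by
  rw [IntegrableOn, volume_pi, Measure.restrict_pi_pi]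
  exact Integrable.fintype_prod_dep fun i => integrableOn_Ici_cexp_mul (hc i)

theorem setIntegral_pi_Ici_prod_cexp_mul (hc : ∀ i, (c i).re < 0) :
    ∫ a in univ.pi (fun _ => Ici (0 : ℝ)), ∏ i : ι, Complex.exp (c i * a i) = ∏ i, -1 / c i := by
  rw [volume_pi, Measure.restrict_pi_pi,
    integral_fintype_prod_eq_prod fun i (t : ℝ) => Complex.exp (c i * t)]
  exact Finset.prod_congr rfl fun i _ => integral_Ici_cexp_mul (hc i)

end Orthant

theorem det_fintypeLinearCombination {ι R : Type*} [Fintype ι] [DecidableEq ι] [CommRing R]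
    (u : ι → ι → R) :
    (Fintype.linearCombination R u).det = (Matrix.of fun i j => u j i).det := by
  rw [← LinearMap.det_toMatrix']
  congr 1
  ext i j
  simp [LinearMap.toMatrix'_apply, Fintype.linearCombination_apply_single]

theorem pairC_add_fintypeLinearCombination {n : ℕ} (v : Fin n → ℝ) (u : Fin n → Fin n → ℝ)
    (a : Fin n → ℝ) (z : Fin n → ℂ) :
    pairC (v + Fintype.linearCombination ℝ u a) z = pairC v z + ∑ i, pairC (u i) z * a i := by
  simp only [pairC, Fintype.linearCombination_apply, Pi.add_apply, Finset.sum_apply,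
    Pi.smul_apply, smul_eq_mul, Complex.ofReal_add, Complex.ofReal_sum, Complex.ofReal_mul,
    add_mul, Finset.sum_add_distrib, Finset.sum_mul]
  rw [Finset.sum_comm]
  congr 1
  refine Finset.sum_congr rfl fun i _ => Finset.sum_congr rfl fun j _ => ?_
  ring

/-- Let `w₁, …, wₙ ∈ ℤ^n` be linearly independent, `v ∈ ℝ^n`, and let
`T = v + {∑ aᵢ wᵢ : aᵢ ≥ 0}` be the shifted full-dimensional simplicial cone with apex `v`.
For every `z ∈ ℂ^n` with `Re ⟨wᵢ, z⟩ < 0` for all `i`, the function `m ↦ e^{⟨m,z⟩}` is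
integrable on `T` and
`∫_T e^{⟨m,z⟩} dλ(m) = |det(w₁,…,wₙ)| · e^{⟨v,z⟩} · ∏ᵢ (-1)/⟨wᵢ,z⟩`. -/
theorem stmt3 (n : ℕ) (w : Fin n → Fin n → ℤ) (v : Fin n → ℝ)
    (hw : LinearIndependent ℝ (fun i => castZ (w i)))
    (T : Set (Fin n → ℝ))
    (hT : T = {x | ∃ a : Fin n → ℝ, (∀ i, 0 ≤ a i) ∧ x = v + ∑ i, a i • castZ (w i)})
    (z : Fin n → ℂ)
    (hz : ∀ i, (pairC (castZ (w i)) z).re < 0) :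
    IntegrableOn (fun m => Complex.exp (pairC m z)) T volume ∧
    ∫ m in T, Complex.exp (pairC m z) ∂volume =
      ((|(Matrix.of fun i j => (w j i : ℝ)).det| : ℝ) : ℂ) * Complex.exp (pairC v z) *
        ∏ i, (-1) / pairC (castZ (w i)) z := by
  set L := Fintype.linearCombination ℝ fun i => castZ (w i)
  have hL : Injective L := hw.fintypeLinearCombination_injective
  have hS : MeasurableSet (univ.pi fun _ : Fin n => Ici (0 : ℝ)) :=
    MeasurableSet.univ_pi fun _ => measurableSet_Ici
  have hT' : T = (v + L ·) '' univ.pi fun _ => Ici 0 := by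
    simp [hT, L, Fintype.linearCombination_apply, Set.image, eq_comm, Pi.le_def]
  have hexp : ∀ a, Complex.exp (pairC (v + L a) z) =
      Complex.exp (pairC v z) * ∏ i, Complex.exp (pairC (castZ (w i)) z * a i) := fun a => by
    rw [pairC_add_fintypeLinearCombination, Complex.exp_add, Complex.exp_sum]
  have hdet : L.det = (Matrix.of fun i j => (w j i : ℝ)).det := det_fintypeLinearCombination _
  simp only [hT', integrableOn_image_const_add_linearMap_iff volume hS hL,
    setIntegral_image_const_add_linearMap volume hS hL, hexp, hdet, integral_const_mul,
    setIntegral_pi_Ici_prod_cexp_mul hz, Complex.real_smul, mul_assoc, and_true]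
  exact ((integrableOn_pi_Ici_prod_cexp_mul hz).const_mul _).const_mul _
end
end

section
/- Fix $z \in \mathbb{C}^n$ with $\mathrm{Re}\,\langle m, z\rangle < 0$ for every $m \in C \setminus \{0\}$. Then the family $(e^{\langle m, z\rangle})_{m \in C \cap \mathbb{Z}^n}$ is summable. Moreover, there is a neighborhood $U$ of $0$ in $\mathbb{R}^r$ such that for every $h \in U \cap \mathbb{Q}^r$ the function $m \mapsto e^{\langle m, z\rangle}$ is integrable on $C(h)$, each series $\sum_{m \in k\,C(h) \cap \mathbb{Z}^n} e^{\langle m, z/k\rangle}$ (for a positive integer $k$ with $kh \in \mathbb{Z}^r$, so that $k\,C(h) = C(kh)$ is a lattice cone) converges absolutely, and $\lim_{k \to \infty,\ kh \in \mathbb{Z}^r} \frac{1}{k^n} \sum_{m \in k\,C(h) \cap \mathbb{Z}^n} e^{\langle m, z/k\rangle} \;=\; \int_{C(h)} e^{\langle m, z\rangle}\, d\lambda(m)$. -/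
open MeasureTheory Filter

noncomputable section

/-- The pairing `⟨m, u⟩ = ∑ i, m i * u i` of a real vector with a lattice vector. -/
def pairR {n : ℕ} (m : Fin n → ℝ) (u : Fin n → ℤ) : ℝ := ∑ i, m i * (u i : ℝ)

/-- The dilated cone `C(t) = {m : ⟨m, uⱼ⟩ + tⱼ ≥ 0 for all j}`. -/
def Cd {n r : ℕ} (u : Fin r → Fin n → ℤ) (t : Fin r → ℝ) : Set (Fin n → ℝ) :=
  {m | ∀ j, 0 ≤ pairR m (u j) + t j}

/-!
Compactness of the unit sphere turns the hypothesis on `z` into a uniform estimate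
`Re ⟨m, z⟩ ≤ B - c ‖m‖` on every shifted cone `C(t)` with `‖t‖ ≤ 1`. This exponential decay makes
all the lattice series absolutely convergent and the integrand integrable. The normalised sum
`k⁻ⁿ ∑_{m ∈ C(kt) ∩ ℤⁿ} e^{⟨m, z/k⟩}` is the integral of a step function, constant on the cells
of the grid `k⁻¹ ℤⁿ`, which converges to `1_{C(t)} e^{⟨·, z⟩}` off the boundary of the convex set
`C(t)`; that boundary is Lebesgue-null, and dominated convergence gives the limit.
-/

open Set Topology Metric

section Pairings

variable {n r : ℕ}

lemma pairR_add (m m' : Fin n → ℝ) (u : Fin n → ℤ) :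
    pairR (m + m') u = pairR m u + pairR m' u := by
  simp only [pairR, Pi.add_apply, add_mul, Finset.sum_add_distrib]

lemma pairR_smul (s : ℝ) (m : Fin n → ℝ) (u : Fin n → ℤ) : pairR (s • m) u = s * pairR m u := by
  simp only [pairR, Pi.smul_apply, smul_eq_mul, Finset.mul_sum, mul_assoc]

lemma pairC_smul (s : ℝ) (m : Fin n → ℝ) (z : Fin n → ℂ) : pairC (s • m) z = s * pairC m z := by
  simp only [pairC, Pi.smul_apply, smul_eq_mul, Complex.ofReal_mul, Finset.mul_sum, mul_assoc]

lemma pairC_zero_left (z : Fin n → ℂ) : pairC 0 z = 0 := by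
  simp [pairC]

lemma pairC_div_natCast (y : Fin n → ℝ) (z : Fin n → ℂ) (k : ℕ) :
    pairC y (fun i => z i / k) = pairC ((k : ℝ)⁻¹ • y) z := by
  simp only [pairC, Pi.smul_apply, smul_eq_mul, Complex.ofReal_mul, Complex.ofReal_inv,
    Complex.ofReal_natCast]
  exact Finset.sum_congr rfl fun _ _ => by ring

lemma re_pairC (m : Fin n → ℝ) (z : Fin n → ℂ) : (pairC m z).re = ∑ j, m j * (z j).re := by
  simp only [pairC, Complex.re_sum, Complex.re_ofReal_mul]

lemma re_pairC_le (m : Fin n → ℝ) (z : Fin n → ℂ) :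
    (pairC m z).re ≤ ‖m‖ * ∑ j, |(z j).re| := by
  rw [re_pairC, Finset.mul_sum]
  refine Finset.sum_le_sum fun j _ => ?_
  calc m j * (z j).re ≤ |m j| * |(z j).re| := by rw [← abs_mul]; exact le_abs_self _
    _ ≤ ‖m‖ * |(z j).re| := by gcongr; exact norm_le_pi_norm m j

lemma continuous_pairR (u : Fin n → ℤ) : Continuous fun m : Fin n → ℝ => pairR m u := by
  unfold pairR; fun_prop

lemma continuous_pairC (z : Fin n → ℂ) : Continuous fun m : Fin n → ℝ => pairC m z := by
  unfold pairC; fun_prop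

lemma isClosed_Cd (u : Fin r → Fin n → ℤ) (t : Fin r → ℝ) : IsClosed (Cd u t) := by
  simp only [Cd, ofPred_forall]
  exact isClosed_iInter fun j =>
    isClosed_le continuous_const ((continuous_pairR _).add continuous_const)

lemma convex_Cd (u : Fin r → Fin n → ℤ) (t : Fin r → ℝ) : Convex ℝ (Cd u t) := by
  intro x hx y hy a b ha hb hab j
  rw [pairR_add, pairR_smul, pairR_smul]
  have key : a * pairR x (u j) + b * pairR y (u j) + t j
      = a * (pairR x (u j) + t j) + b * (pairR y (u j) + t j) := by
    linear_combination -(t j) * hab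
  rw [key]
  exact add_nonneg (mul_nonneg ha (hx j)) (mul_nonneg hb (hy j))

lemma mem_Cd_mul_iff {u : Fin r → Fin n → ℤ} {t : Fin r → ℝ} {k : ℝ} (hk : 0 < k)
    {y : Fin n → ℝ} : y ∈ Cd u (fun j => k * t j) ↔ k⁻¹ • y ∈ Cd u t := by
  simp only [Cd, mem_ofPred_eq, pairR_smul]
  refine forall_congr' fun j => ?_
  rw [← mul_nonneg_iff_of_pos_left (inv_pos.2 hk), mul_add, inv_mul_cancel_left₀ hk.ne']

end Pairings

section Decay

variable {n r : ℕ} (u : Fin r → Fin n → ℤ)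

def coneDeficit (m : Fin n → ℝ) : ℝ := ∑ j, min 0 (pairR m (u j))

lemma continuous_coneDeficit : Continuous (coneDeficit u) := by
  unfold coneDeficit; have := continuous_pairR (n := n); fun_prop

lemma coneDeficit_nonpos (m : Fin n → ℝ) : coneDeficit u m ≤ 0 :=
  Finset.sum_nonpos fun _ _ => min_le_left _ _

lemma mem_Cd_zero_of_coneDeficit_eq_zero {m : Fin n → ℝ} (h : coneDeficit u m = 0) :
    m ∈ Cd u 0 := by
  intro j
  have := (Finset.sum_eq_zero_iff_of_nonpos fun j _ => min_le_left 0 (pairR m (u j))).1 h j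
    (Finset.mem_univ j)
  simpa using this

lemma coneDeficit_smul {s : ℝ} (hs : 0 ≤ s) (m : Fin n → ℝ) :
    coneDeficit u (s • m) = s * coneDeficit u m := by
  simp only [coneDeficit, pairR_smul, Finset.mul_sum, mul_min_of_nonneg _ _ hs, mul_zero]

lemma neg_le_coneDeficit {t : Fin r → ℝ} (ht : ∀ j, t j ≤ 1) {m : Fin n → ℝ} (hm : m ∈ Cd u t) :
    -(r : ℝ) ≤ coneDeficit u m := by
  have : ∑ _j : Fin r, (-1 : ℝ) ≤ coneDeficit u m :=
    Finset.sum_le_sum fun j _ => le_min (by norm_num) (by linarith [hm j, ht j])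
  simpa using this

variable {u}

/-- Tolerating a small negative `coneDeficit` is what lets the decay survive the passage from the
cone `Cd u 0` to the shifted cones `Cd u t`. -/
lemma exists_re_pairC_le_of_coneDeficit {z : Fin n → ℂ}
    (hz : ∀ m ∈ Cd u 0, m ≠ 0 → (pairC m z).re < 0) :
    ∃ ε > 0, ∀ m, -(ε * ‖m‖) < coneDeficit u m → (pairC m z).re ≤ -(ε * ‖m‖) := by
  have hpos : ∀ m ∈ sphere (0 : Fin n → ℝ) 1, 0 < max (-(pairC m z).re) (-coneDeficit u m) := by
    intro m hm
    rcases (coneDeficit_nonpos u m).lt_or_eq with hlt | heq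
    · exact lt_max_of_lt_right (neg_pos.2 hlt)
    · have hm0 : m ≠ 0 := ne_zero_of_mem_unit_sphere ⟨m, hm⟩
      exact lt_max_of_lt_left (neg_pos.2 (hz m (mem_Cd_zero_of_coneDeficit_eq_zero u heq) hm0))
  have hcont : Continuous fun m => max (-(pairC m z).re) (-coneDeficit u m) :=
    (Complex.continuous_re.comp (continuous_pairC z)).neg.max (continuous_coneDeficit u).neg
  obtain ⟨ε, hε, hmin⟩ :=
    (isCompact_sphere (0 : Fin n → ℝ) 1).exists_forall_le' hcont.continuousOn hpos
  refine ⟨ε, hε, fun m hm => ?_⟩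
  rcases eq_or_ne m 0 with rfl | hm0
  · simp [pairC_zero_left]
  have hnorm : 0 < ‖m‖ := norm_pos_iff.2 hm0
  set w := ‖m‖⁻¹ • m
  have hw : w ∈ sphere (0 : Fin n → ℝ) 1 := by
    simp [w, norm_smul, hnorm.ne']
  have hdef : -ε < coneDeficit u w := by
    rw [coneDeficit_smul u (inv_nonneg.2 hnorm.le), lt_inv_mul_iff₀ hnorm]
    linarith
  have hre : (pairC w z).re ≤ -ε := by
    have := hmin w hw
    rw [le_max_iff] at this
    rcases this with h | h <;> linarith
  have hscale : (pairC m z).re = ‖m‖ * (pairC w z).re := by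
    rw [pairC_smul, Complex.re_ofReal_mul, ← mul_assoc, mul_inv_cancel₀ hnorm.ne', one_mul]
  rw [hscale]
  nlinarith

lemma exists_re_pairC_le_on_Cd {z : Fin n → ℂ}
    (hz : ∀ m ∈ Cd u 0, m ≠ 0 → (pairC m z).re < 0) :
    ∃ c > 0, ∃ B, ∀ t : Fin r → ℝ, ‖t‖ ≤ 1 → ∀ m ∈ Cd u t, (pairC m z).re ≤ B - c * ‖m‖ := by
  obtain ⟨ε, hε, hdecay⟩ := exists_re_pairC_le_of_coneDeficit hz
  set Z := ∑ j, |(z j).re|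
  have hZ : 0 ≤ Z := Finset.sum_nonneg fun _ _ => abs_nonneg _
  refine ⟨ε, hε, r / ε * Z + r, fun t ht m hm => ?_⟩
  have hdef := neg_le_coneDeficit u
    (fun j => (le_abs_self _).trans ((norm_le_pi_norm t j).trans ht)) hm
  have hB : 0 ≤ r / ε * Z := by positivity
  rcases lt_or_ge (r : ℝ) (ε * ‖m‖) with hlarge | hsmall
  · linarith [hdecay m (by linarith)]
  · have hm : ‖m‖ ≤ r / ε := by rw [le_div_iff₀ hε]; linarith
    have := re_pairC_le m z
    nlinarith

end Decay

section ExpDecay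

open Module Nat in
lemma integrable_exp_neg_mul_norm {E : Type*} [NormedAddCommGroup E] [NormedSpace ℝ E]
    [FiniteDimensional ℝ E] [MeasurableSpace E] [BorelSpace E] (μ : Measure E)
    [μ.IsAddHaarMeasure] {a : ℝ} (ha : 0 < a) :
    Integrable (fun x => Real.exp (-(a * ‖x‖))) μ := by
  set N := finrank ℝ E + 1
  refine ((integrable_one_add_norm (μ := μ) (r := N) (by simp [N])).const_mul
    (N ! * Real.exp a / a ^ N)).mono' (by fun_prop) (ae_of_all _ fun x => ?_)
  have hx : 0 < 1 + ‖x‖ := by positivity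
  -- `yᴺ / N! ≤ exp y` at `y = a (1 + ‖x‖)`
  have key := Real.pow_div_factorial_le_exp _ (mul_pos ha hx).le N
  rw [div_le_iff₀ (by positivity), mul_pow, mul_add, mul_one, Real.exp_add] at key
  rw [Real.norm_of_nonneg (Real.exp_pos _).le, Real.rpow_neg hx.le, Real.rpow_natCast,
    Real.exp_neg]
  field_simp
  linarith

lemma integrable_exp_sub_mul_norm {E : Type*} [NormedAddCommGroup E] [NormedSpace ℝ E]
    [FiniteDimensional ℝ E] [MeasurableSpace E] [BorelSpace E] (μ : Measure E)
    [μ.IsAddHaarMeasure] (B : ℝ) {a : ℝ} (ha : 0 < a) :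
    Integrable (fun x => Real.exp (B - a * ‖x‖)) μ := by
  simpa only [sub_eq_add_neg, Real.exp_add] using (integrable_exp_neg_mul_norm μ ha).const_mul _

lemma summable_exp_neg_mul_abs_int {b : ℝ} (hb : 0 < b) :
    Summable fun q : ℤ => Real.exp (-(b * |(q : ℝ)|)) := by
  have hgeom : Summable fun m : ℕ => Real.exp (-(b * |((m : ℤ) : ℝ)|)) := by
    refine (summable_geometric_of_lt_one (Real.exp_pos (-b)).le
      (Real.exp_lt_one_iff.2 (neg_neg_of_pos hb))).congr fun m => ?_
    rw [← Real.exp_nat_mul, Int.cast_natCast, abs_of_nonneg (Nat.cast_nonneg m)]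
    ring_nf
  exact .of_nat_of_neg hgeom (by simpa only [Int.cast_neg, abs_neg] using hgeom)

lemma summable_prod_apply {β : Type*} {f : β → ℝ} (hf : Summable f) (h0 : 0 ≤ f) :
    ∀ n : ℕ, Summable fun m : Fin n → β => ∏ i, f (m i)
  | 0 => .of_finite
  | n + 1 => by
    rw [← (Fin.consEquiv fun _ => β).summable_iff]
    refine (hf.mul_of_nonneg (summable_prod_apply hf h0 n) h0
      fun _ => Finset.prod_nonneg fun _ _ => h0 _).congr fun p => ?_
    simp [Fin.prod_univ_succ, Fin.consEquiv]

lemma summable_exp_sub_mul_norm_castZ {n : ℕ} (B : ℝ) {a : ℝ} (ha : 0 < a) :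
    Summable fun m : Fin n → ℤ => Real.exp (B - a * ‖castZ m‖) := by
  -- `n + 1` rather than `n`, so that `b > 0` also for `n = 0`
  set b := a / (n + 1)
  have hb : 0 < b := by positivity
  refine Summable.of_nonneg_of_le (fun _ => (Real.exp_pos _).le) (fun m => ?_)
    (((summable_prod_apply (summable_exp_neg_mul_abs_int hb)
      fun _ => (Real.exp_pos _).le) n).mul_left (Real.exp B))
  have hsum : ∑ i, |(m i : ℝ)| ≤ n * ‖castZ m‖ := by
    simpa [castZ] using Finset.sum_le_sum fun i (_ : i ∈ Finset.univ) => norm_le_pi_norm (castZ m) i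
  have hle : b * ∑ i, |(m i : ℝ)| ≤ a * ‖castZ m‖ :=
    calc b * ∑ i, |(m i : ℝ)| ≤ b * ((n + 1) * ‖castZ m‖) := by
          gcongr; linarith [norm_nonneg (castZ m)]
      _ = a * ‖castZ m‖ := by simp only [b]; field_simp
  rw [← Real.exp_sum, ← Real.exp_add, Real.exp_le_exp, Finset.sum_neg_distrib, ← Finset.mul_sum]
  linarith

end ExpDecay

section Grid

variable {n : ℕ}

def gridIndex (k : ℕ) (x : Fin n → ℝ) : Fin n → ℤ := fun i => ⌊(k : ℝ) * x i⌋

lemma measurable_gridIndex (k : ℕ) : Measurable (gridIndex (n := n) k) := by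
  unfold gridIndex; fun_prop

lemma gridIndex_preimage_singleton {k : ℕ} (hk : 0 < k) (m : Fin n → ℤ) :
    gridIndex k ⁻¹' {m} = univ.pi fun i => Ico ((m i : ℝ) / k) ((m i + 1) / k) := by
  have hk' : (0 : ℝ) < k := Nat.cast_pos.2 hk
  ext x
  simp only [mem_preimage, mem_singleton_iff, mem_univ_pi, mem_Ico, funext_iff, gridIndex,
    Int.floor_eq_iff, div_le_iff₀' hk', lt_div_iff₀' hk']

lemma volume_gridIndex_preimage_singleton {k : ℕ} (hk : 0 < k) (m : Fin n → ℤ) :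
    volume (gridIndex k ⁻¹' {m}) = ENNReal.ofReal ((k : ℝ) ^ n)⁻¹ := by
  rw [gridIndex_preimage_singleton hk, Real.volume_pi_Ico]
  have hside : ∀ i, ((m i : ℝ) + 1) / k - m i / k = (k : ℝ)⁻¹ := fun i => by
    field_simp; ring
  simp only [hside, Finset.prod_const, Finset.card_univ, Fintype.card_fin,
    ← ENNReal.ofReal_pow (inv_nonneg.2 (Nat.cast_nonneg k)), inv_pow]

lemma integral_comp_gridIndex {E : Type*} [NormedAddCommGroup E] [NormedSpace ℝ E]
    [CompleteSpace E] {k : ℕ} (hk : 0 < k) {G : (Fin n → ℤ) → E}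
    (hG : Integrable fun x => G (gridIndex k x)) :
    ∫ x, G (gridIndex k x) = ((k : ℝ) ^ n)⁻¹ • ∑' m, G m := by
  have hmeas := (measurable_gridIndex (n := n) k).aemeasurable (μ := volume)
  have hGmeas : AEStronglyMeasurable G (volume.map (gridIndex k)) := .of_discrete
  rw [← integral_map hmeas hGmeas, integral_countable ((integrable_map_measure hGmeas hmeas).2 hG)]
  have hcell : ∀ m, (volume.map (gridIndex k)).real {m} = ((k : ℝ) ^ n)⁻¹ := fun m => by
    rw [measureReal_def, Measure.map_apply (measurable_gridIndex k) (measurableSet_singleton m),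
      volume_gridIndex_preimage_singleton hk, ENNReal.toReal_ofReal (by positivity)]
  simp only [hcell]
  exact tsum_const_smul'' _

lemma norm_smul_castZ_gridIndex_sub_le {k : ℕ} (hk : 0 < k) (x : Fin n → ℝ) :
    ‖(k : ℝ)⁻¹ • castZ (gridIndex k x) - x‖ ≤ (k : ℝ)⁻¹ := by
  have hk' : (0 : ℝ) < k := Nat.cast_pos.2 hk
  refine (pi_norm_le_iff_of_nonneg (by positivity)).2 fun i => ?_
  have h1 := Int.floor_le ((k : ℝ) * x i)
  have h2 := Int.lt_floor_add_one ((k : ℝ) * x i)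
  have e : (k : ℝ)⁻¹ * ⌊(k : ℝ) * x i⌋ - x i = (k : ℝ)⁻¹ * (⌊(k : ℝ) * x i⌋ - k * x i) := by
    field_simp
  rw [Pi.sub_apply, Pi.smul_apply, smul_eq_mul, Real.norm_eq_abs, abs_le]
  simp only [castZ, gridIndex, e]
  constructor <;> nlinarith [inv_pos.2 hk']

lemma tendsto_smul_castZ_gridIndex (x : Fin n → ℝ) :
    Tendsto (fun k : ℕ => (k : ℝ)⁻¹ • castZ (gridIndex k x)) atTop (𝓝 x) := by
  refine tendsto_iff_norm_sub_tendsto_zero.2 (squeeze_zero' (Eventually.of_forall fun _ =>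
    norm_nonneg _) ?_ tendsto_inv_atTop_nhds_zero_nat)
  filter_upwards [eventually_gt_atTop 0] with k hk
  exact norm_smul_castZ_gridIndex_sub_le hk x

end Grid

section RiemannSum

variable {n : ℕ} {E : Type*} [NormedAddCommGroup E] {f : (Fin n → ℝ) → E} {s : Set (Fin n → ℝ)}
  {B c : ℝ}

lemma norm_indicator_le_exp (hf : ∀ x ∈ s, ‖f x‖ ≤ Real.exp (B - c * ‖x‖)) (y : Fin n → ℝ) :
    ‖s.indicator f y‖ ≤ Real.exp (B - c * ‖y‖) := by
  rw [norm_indicator_eq_indicator_norm]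
  exact indicator_le' hf (fun _ _ => (Real.exp_pos _).le) y

variable [CompleteSpace E]

lemma summable_indicator_smul_castZ (hc : 0 < c)
    (hf : ∀ x ∈ s, ‖f x‖ ≤ Real.exp (B - c * ‖x‖)) {k : ℕ} (hk : 0 < k) :
    Summable fun m : Fin n → ℤ => s.indicator f ((k : ℝ)⁻¹ • castZ m) := by
  have hk' : (0 : ℝ) < k := Nat.cast_pos.2 hk
  refine (summable_exp_sub_mul_norm_castZ B (mul_pos hc (inv_pos.2 hk'))).of_norm_bounded
    fun m => (norm_indicator_le_exp hf _).trans_eq ?_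
  rw [norm_smul_of_nonneg (inv_nonneg.2 hk'.le), mul_assoc]

variable [NormedSpace ℝ E]

theorem tendsto_smul_tsum_indicator_smul_castZ (hfc : Continuous f) (hs : MeasurableSet s)
    (hfr : volume (frontier s) = 0) (hc : 0 < c)
    (hf : ∀ x ∈ s, ‖f x‖ ≤ Real.exp (B - c * ‖x‖)) :
    Tendsto (fun k : ℕ => ((k : ℝ) ^ n)⁻¹ • ∑' m : Fin n → ℤ, s.indicator f ((k : ℝ)⁻¹ • castZ m))
      atTop (𝓝 (∫ x in s, f x)) := by
  set G : ℕ → (Fin n → ℤ) → E := fun k m => s.indicator f ((k : ℝ)⁻¹ • castZ m)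
  have hGmeas : ∀ k, AEStronglyMeasurable fun x => G k (gridIndex k x) := fun k =>
    ((StronglyMeasurable.of_discrete (f := G k)).comp_measurable
      (measurable_gridIndex k)).aestronglyMeasurable
  have hGbound : ∀ k, 0 < k → ∀ x, ‖G k (gridIndex k x)‖ ≤ Real.exp (B + c - c * ‖x‖) := by
    intro k hk x
    refine (norm_indicator_le_exp hf _).trans (Real.exp_le_exp.2 ?_)
    have hclose := norm_smul_castZ_gridIndex_sub_le hk x
    have hk1 : (k : ℝ)⁻¹ ≤ 1 := inv_le_one_of_one_le₀ (Nat.one_le_cast.2 hk)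
    have := norm_sub_norm_le x ((k : ℝ)⁻¹ • castZ (gridIndex k x))
    rw [norm_sub_rev] at this
    nlinarith
  have hint := integrable_exp_sub_mul_norm (volume : Measure (Fin n → ℝ)) (B + c) hc
  have hlim : ∀ᵐ x, Tendsto (fun k => G k (gridIndex k x)) atTop (𝓝 (s.indicator f x)) := by
    filter_upwards [measure_eq_zero_iff_ae_notMem.1 hfr] with x hx
    exact ((hfc.continuousOn.continuousAt_indicator hx).tendsto).comp
      (tendsto_smul_castZ_gridIndex x)
  have hdom := tendsto_integral_filter_of_dominated_convergence _ (.of_forall hGmeas)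
    ((eventually_gt_atTop 0).mono fun k hk => ae_of_all _ (hGbound k hk)) hint hlim
  rw [integral_indicator hs] at hdom
  refine hdom.congr' ((eventually_gt_atTop 0).mono fun k hk => ?_)
  exact integral_comp_gridIndex hk (hint.mono' (hGmeas k) (ae_of_all _ (hGbound k hk)))

end RiemannSum

lemma indicator_Cd_mul_eq {n r : ℕ} {u : Fin r → Fin n → ℤ} {t : Fin r → ℝ} {z : Fin n → ℂ}
    {k : ℕ} (hk : 0 < k) (m : Fin n → ℤ) :
    {x : Fin n → ℤ | castZ x ∈ Cd u fun j => (k : ℝ) * t j}.indicator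
        (fun x => Complex.exp (pairC (castZ x) fun i => z i / k)) m
      = (Cd u t).indicator (fun y => Complex.exp (pairC y z)) ((k : ℝ)⁻¹ • castZ m) := by
  have hk' : (0 : ℝ) < k := Nat.cast_pos.2 hk
  by_cases hm : m ∈ {x : Fin n → ℤ | castZ x ∈ Cd u fun j => (k : ℝ) * t j}
  · rw [indicator_of_mem hm, indicator_of_mem ((mem_Cd_mul_iff hk').1 hm), pairC_div_natCast]
  · rw [indicator_of_notMem hm, indicator_of_notMem (mt (mem_Cd_mul_iff hk').2 hm)]

theorem stmt4_general (n r : ℕ) (u : Fin r → Fin n → ℤ)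
    (z : Fin n → ℂ) (hz : ∀ m ∈ Cd u 0, m ≠ 0 → (pairC m z).re < 0) :
    Summable (fun m : {x : Fin n → ℤ // castZ x ∈ Cd u 0} =>
      Complex.exp (pairC (castZ m.1) z)) ∧
    ∃ U ∈ nhds (0 : Fin r → ℝ), ∀ h : Fin r → ℚ, (fun j => (h j : ℝ)) ∈ U →
      IntegrableOn (fun m => Complex.exp (pairC m z)) (Cd u fun j => (h j : ℝ)) volume ∧
      (∀ k : ℕ, 0 < k → (∀ j, ∃ a : ℤ, (k : ℚ) * h j = (a : ℚ)) →
        Summable (fun m : {x : Fin n → ℤ // castZ x ∈ Cd u fun j => (k : ℝ) * (h j : ℝ)} =>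
          Complex.exp (pairC (castZ m.1) fun i => z i / (k : ℂ)))) ∧
      Tendsto
        (fun k : ℕ => (1 / (k : ℂ) ^ n) *
          ∑' m : {x : Fin n → ℤ // castZ x ∈ Cd u fun j => (k : ℝ) * (h j : ℝ)},
            Complex.exp (pairC (castZ m.1) fun i => z i / (k : ℂ)))
        (atTop ⊓ Filter.principal {k : ℕ | 0 < k ∧ ∀ j, ∃ a : ℤ, (k : ℚ) * h j = (a : ℚ)})
        (nhds (∫ m in Cd u fun j => (h j : ℝ), Complex.exp (pairC m z) ∂volume)) := by
  obtain ⟨c, hc, B, hB⟩ := exists_re_pairC_le_on_Cd hz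
  have hbound : ∀ t : Fin r → ℝ, ‖t‖ ≤ 1 → ∀ m ∈ Cd u t,
      ‖Complex.exp (pairC m z)‖ ≤ Real.exp (B - c * ‖m‖) := fun t ht m hm => by
    rw [Complex.norm_exp]; exact Real.exp_le_exp.2 (hB t ht m hm)
  refine ⟨((summable_exp_sub_mul_norm_castZ B hc).subtype _).of_norm_bounded
    fun m => hbound 0 (by simp) _ m.2, closedBall 0 1, closedBall_mem_nhds _ one_pos,
    fun h hh => ?_⟩
  set t : Fin r → ℝ := fun j => h j
  have hf := hbound t (mem_closedBall_zero_iff.1 hh)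
  have hcont : Continuous fun m => Complex.exp (pairC m z) :=
    Complex.continuous_exp.comp (continuous_pairC z)
  refine ⟨(integrable_exp_sub_mul_norm volume B hc).integrableOn.mono' hcont.aestronglyMeasurable
    (ae_restrict_of_forall_mem (isClosed_Cd u t).measurableSet hf), fun k hk _ => ?_, ?_⟩
  · have := summable_indicator_smul_castZ hc hf hk
    rw [← funext (indicator_Cd_mul_eq hk), ← summable_subtype_iff_indicator] at this
    exact this
  · refine ((tendsto_smul_tsum_indicator_smul_castZ hcont (isClosed_Cd u t).measurableSet
      ((convex_Cd u t).addHaar_frontier volume) hc hf).mono_left inf_le_left).congr'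
      ((eventually_gt_atTop 0).filter_mono inf_le_left |>.mono fun k hk => ?_)
    dsimp only
    rw [← funext (indicator_Cd_mul_eq hk), ← tsum_subtype, Complex.real_smul, one_div]
    push_cast
    rfl

/-- Let `C = {m : ⟨m,uⱼ⟩ ≥ 0}` be a full-dimensional pointed rational
polyhedral cone, and fix `z ∈ ℂ^n` with `Re ⟨m,z⟩ < 0` for all `m ∈ C \ {0}`.  Then the family
`(e^{⟨m,z⟩})_{m ∈ C ∩ ℤ^n}` is summable.  Moreover, there is a neighborhood `U` of `0` in `ℝ^r`
such that for every rational `h ∈ U`, the function `m ↦ e^{⟨m,z⟩}` is integrable on `C(h)`,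
each series `∑_{m ∈ kC(h) ∩ ℤ^n} e^{⟨m,z/k⟩}` (for positive integers `k` with `kh ∈ ℤ^r`,
so that `kC(h) = C(kh)`) converges absolutely, and
`lim_{k → ∞, kh ∈ ℤ^r} k⁻ⁿ ∑_{m ∈ kC(h) ∩ ℤ^n} e^{⟨m,z/k⟩} = ∫_{C(h)} e^{⟨m,z⟩} dλ(m)`. -/
theorem stmt4 (n r : ℕ) (u : Fin r → Fin n → ℤ) (hu : ∀ j, u j ≠ 0)
    (hfull : (interior (Cd u 0)).Nonempty)
    (hpointed : Cd u 0 ∩ (-(Cd u 0)) = {0})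
    (z : Fin n → ℂ) (hz : ∀ m ∈ Cd u 0, m ≠ 0 → (pairC m z).re < 0) :
    Summable (fun m : {x : Fin n → ℤ // castZ x ∈ Cd u 0} =>
      Complex.exp (pairC (castZ m.1) z)) ∧
    ∃ U ∈ nhds (0 : Fin r → ℝ), ∀ h : Fin r → ℚ, (fun j => (h j : ℝ)) ∈ U →
      IntegrableOn (fun m => Complex.exp (pairC m z)) (Cd u fun j => (h j : ℝ)) volume ∧
      (∀ k : ℕ, 0 < k → (∀ j, ∃ a : ℤ, (k : ℚ) * h j = (a : ℚ)) →
        Summable (fun m : {x : Fin n → ℤ // castZ x ∈ Cd u fun j => (k : ℝ) * (h j : ℝ)} =>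
          Complex.exp (pairC (castZ m.1) fun i => z i / (k : ℂ)))) ∧
      Tendsto
        (fun k : ℕ => (1 / (k : ℂ) ^ n) *
          ∑' m : {x : Fin n → ℤ // castZ x ∈ Cd u fun j => (k : ℝ) * (h j : ℝ)},
            Complex.exp (pairC (castZ m.1) fun i => z i / (k : ℂ)))
        (atTop ⊓ Filter.principal {k : ℕ | 0 < k ∧ ∀ j, ∃ a : ℤ, (k : ℚ) * h j = (a : ℚ)})
        (nhds (∫ m in Cd u fun j => (h j : ℝ), Complex.exp (pairC m z) ∂volume)) :=
  stmt4_general n r u z hz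
end
end
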